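/- (Yang's theorem.) Let 0 ≤ ε ≤ 1/2 and let (X, Y) be jointly distributed on {0,1}^n × {0,1}^n with P(X = x, Y = y) = 2^{−n} (1−ε)^{n − d_H(x,y)} ε^{d_H(x,y)}, where d_H denotes Hamming distance (i.e., the pairs (X_i, Y_i) are i.i.d., each X_i is a uniform bit, and Y_i equals X_i with probability 1−ε). Then for all functions f, g : {0,1}^n → {0,1}, the correlation c_{f(X)g(Y)} := 2·P(f(X) = g(Y)) − 1 satisfies c_{f(X)g(Y)} ≤ 1 − 2ε(1 − 4δ²), where δ := max( |P(f(X)=0) − 1/2|, |P(g(Y)=0) − 1/2| ). -/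

import Mathlib

open Finset

noncomputable def muCorr (ε : ℝ) (n : ℕ) (x y : Fin n → Bool) : ℝ :=
  (1/2)^n * (1 - ε)^(n - hammingDist x y) * ε^(hammingDist x y)

namespace Yang

noncomputable section

variable (ε : ℝ) {n : ℕ}

/-- sign of a bit -/
def sgn (b : Bool) : ℝ := if b then -1 else 1

/-- character -/
def chi (s x : Fin n → Bool) : ℝ := ∏ i, sgn (s i && x i)

/-- one-coordinate kernel -/
def kk (a b : Bool) : ℝ := if a = b then (1 - ε)/2 else ε/2

/-- Fourier coefficient -/
def hat (F : (Fin n → Bool) → ℝ) (s : Fin n → Bool) : ℝ :=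
  (1/2 : ℝ)^n * ∑ x, F x * chi s x

/-- noise factor -/
def rpow (s : Fin n → Bool) : ℝ := ∏ i, (if s i then 1 - 2*ε else 1)

lemma sum_pi_prod (H : Fin n → Bool → ℝ) :
    ∑ x : Fin n → Bool, ∏ i, H i (x i) = ∏ i, (H i false + H i true) := by
  classical
  rw [← Fintype.piFinset_univ, ← Finset.prod_univ_sum]
  simp [add_comm]

lemma mu_prod (x y : Fin n → Bool) :
    muCorr ε n x y = ∏ i, kk ε (x i) (y i) := by
  classical
  have hsplit := Finset.prod_filter_mul_prod_filter_not (univ : Finset (Fin n))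
      (fun i => x i = y i) (fun i => kk ε (x i) (y i))
  have hd : hammingDist x y = (univ.filter (fun i => ¬ x i = y i)).card := rfl
  have hc : (univ.filter (fun i => x i = y i)).card
      + (univ.filter (fun i => ¬ x i = y i)).card = n := by
    simpa using Finset.card_filter_add_card_filter_not
      (s := (univ : Finset (Fin n))) (fun i => x i = y i)
  have h1 : ∏ i ∈ univ.filter (fun i => x i = y i), kk ε (x i) (y i)
      = ((1-ε)/2) ^ (univ.filter (fun i => x i = y i)).card := by
    rw [← Finset.prod_const]
    exact Finset.prod_congr rfl fun i hi => by
      simp [kk, (Finset.mem_filter.1 hi).2]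
  have h2 : ∏ i ∈ univ.filter (fun i => ¬ x i = y i), kk ε (x i) (y i)
      = (ε/2) ^ (univ.filter (fun i => ¬ x i = y i)).card := by
    rw [← Finset.prod_const]
    exact Finset.prod_congr rfl fun i hi => by
      simp [kk, (Finset.mem_filter.1 hi).2]
  rw [← hsplit, h1, h2, muCorr, hd]
  have hnd : n - (univ.filter (fun i => ¬ x i = y i)).card
      = (univ.filter (fun i => x i = y i)).card := by omega
  rw [hnd]
  have hp : (1/2:ℝ)^n = (1/2:ℝ)^((univ.filter (fun i => x i = y i)).card
      + (univ.filter (fun i => ¬ x i = y i)).card) := by rw [hc]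
  rw [hp, div_pow, div_pow, pow_add]
  rw [div_pow]
  ring

lemma kk_expand (a b : Bool) :
    kk ε a b = ∑ s : Bool,
      ((if s then 1 - 2*ε else 1) * ((1/2) * sgn (s && a)) * ((1/2) * sgn (s && b))) := by
  cases a <;> cases b <;> simp [kk, sgn] <;> ring

lemma prod_term (s x y : Fin n → Bool) :
    ∏ i, ((if s i then 1 - 2*ε else 1) * ((1/2 : ℝ) * sgn (s i && x i)) * ((1/2 : ℝ) * sgn (s i && y i)))
    = rpow ε s * ((1/2:ℝ)^n * chi s x) * ((1/2:ℝ)^n * chi s y) := by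
  simp only [Finset.prod_mul_distrib, Finset.prod_const, rpow, chi, Finset.card_univ,
    Fintype.card_fin]

lemma sum_helper (F G A B : (Fin n → Bool) → ℝ) (T : ℝ) :
    ∑ x, ∑ y, F x * G y * (T * A x * B y)
      = T * ((∑ x, F x * A x) * (∑ y, G y * B y)) := by
  rw [Finset.sum_mul_sum, Finset.mul_sum]
  refine Finset.sum_congr rfl fun x _ => ?_
  rw [Finset.mul_sum]
  exact Finset.sum_congr rfl fun y _ => by ring

lemma corr_eq (F G : (Fin n → Bool) → ℝ) :
    ∑ x, ∑ y, F x * G y * muCorr ε n x y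
      = ∑ s, rpow ε s * (hat F s * hat G s) := by
  classical
  have step1 : ∀ x y : Fin n → Bool, F x * G y * muCorr ε n x y
      = ∑ s : Fin n → Bool, F x * G y *
          ∏ i, ((if s i then 1 - 2*ε else 1) * ((1/2 : ℝ) * sgn (s i && x i))
              * ((1/2 : ℝ) * sgn (s i && y i))) := by
    intro x y
    rw [mu_prod, ← Finset.mul_sum]
    congr 1
    calc ∏ i, kk ε (x i) (y i)
        = ∏ i, ∑ b : Bool, ((if b then 1 - 2*ε else 1) * ((1/2 : ℝ) * sgn (b && x i))
            * ((1/2 : ℝ) * sgn (b && y i))) := by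
          exact Finset.prod_congr rfl fun i _ => kk_expand ε (x i) (y i)
      _ = _ := by
          rw [← Fintype.piFinset_univ, Finset.prod_univ_sum]
  calc ∑ x, ∑ y, F x * G y * muCorr ε n x y
      = ∑ x, ∑ y, ∑ s : Fin n → Bool, F x * G y *
          ∏ i, ((if s i then 1 - 2*ε else 1) * ((1/2 : ℝ) * sgn (s i && x i))
              * ((1/2 : ℝ) * sgn (s i && y i))) := by
        exact Finset.sum_congr rfl fun x _ => Finset.sum_congr rfl fun y _ => step1 x y
    _ = ∑ x, ∑ s : Fin n → Bool, ∑ y, F x * G y *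
          ∏ i, ((if s i then 1 - 2*ε else 1) * ((1/2 : ℝ) * sgn (s i && x i))
              * ((1/2 : ℝ) * sgn (s i && y i))) := by
        exact Finset.sum_congr rfl fun x _ => Finset.sum_comm
    _ = ∑ s : Fin n → Bool, ∑ x, ∑ y, F x * G y *
          ∏ i, ((if s i then 1 - 2*ε else 1) * ((1/2 : ℝ) * sgn (s i && x i))
              * ((1/2 : ℝ) * sgn (s i && y i))) := Finset.sum_comm
    _ = ∑ s, rpow ε s * (hat F s * hat G s) := by
        refine Finset.sum_congr rfl fun s _ => ?_
        simp_rw [prod_term]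
        rw [sum_helper]
        unfold hat
        rw [show (∑ x, F x * ((1/2:ℝ)^n * chi s x)) = (1/2:ℝ)^n * ∑ x, F x * chi s x by
            rw [Finset.mul_sum]; exact Finset.sum_congr rfl fun x _ => by ring,
          show (∑ y, G y * ((1/2:ℝ)^n * chi s y)) = (1/2:ℝ)^n * ∑ y, G y * chi s y by
            rw [Finset.mul_sum]; exact Finset.sum_congr rfl fun y _ => by ring]

set_option maxHeartbeats 1000000 in
lemma sum_chi_mul (x y : Fin n → Bool) :
    ∑ s : Fin n → Bool, chi s x * chi s y = if x = y then (2:ℝ)^n else 0 := by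
  classical
  have h1 : ∑ s : Fin n → Bool, chi s x * chi s y
      = ∏ i, (if x i = y i then (2:ℝ) else 0) := by
    calc ∑ s : Fin n → Bool, chi s x * chi s y
        = ∑ s : Fin n → Bool, ∏ i, (sgn (s i && x i) * sgn (s i && y i)) := by
          refine Finset.sum_congr rfl fun s _ => ?_
          rw [chi, chi, ← Finset.prod_mul_distrib]
      _ = ∏ i, (sgn (false && x i) * sgn (false && y i) + sgn (true && x i) * sgn (true && y i)) :=
          sum_pi_prod (fun i b => sgn (b && x i) * sgn (b && y i))
      _ = ∏ i, (if x i = y i then (2:ℝ) else 0) := by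
          refine Finset.prod_congr rfl fun i _ => ?_
          cases hx : x i <;> cases hy : y i <;> simp [sgn] <;> norm_num
  rw [h1]
  by_cases h : x = y
  · simp [h, Finset.prod_const, Finset.card_univ]
  · rw [if_neg h]
    obtain ⟨i, hi⟩ := Function.ne_iff.1 h
    exact Finset.prod_eq_zero (mem_univ i) (by simp [hi])

lemma parseval (F : (Fin n → Bool) → ℝ) (hF : ∀ x, F x * F x = 1) :
    ∑ s : Fin n → Bool, hat F s * hat F s = 1 := by
  classical
  have key : ∀ s : Fin n → Bool, hat F s * hat F s
      = ∑ x, ∑ y, ((1/2:ℝ)^n * (1/2:ℝ)^n) * (F x * F y) * (chi s x * chi s y) := by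
    intro s
    rw [hat, mul_mul_mul_comm, Finset.sum_mul_sum]
    rw [Finset.mul_sum]
    refine Finset.sum_congr rfl fun x _ => ?_
    rw [Finset.mul_sum]
    exact Finset.sum_congr rfl fun y _ => by ring
  calc ∑ s : Fin n → Bool, hat F s * hat F s
      = ∑ s : Fin n → Bool, ∑ x, ∑ y,
          ((1/2:ℝ)^n * (1/2:ℝ)^n) * (F x * F y) * (chi s x * chi s y) := by
        exact Finset.sum_congr rfl fun s _ => key s
    _ = ∑ x, ∑ s : Fin n → Bool, ∑ y,
          ((1/2:ℝ)^n * (1/2:ℝ)^n) * (F x * F y) * (chi s x * chi s y) := Finset.sum_comm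
    _ = ∑ x, ∑ y, ∑ s : Fin n → Bool,
          ((1/2:ℝ)^n * (1/2:ℝ)^n) * (F x * F y) * (chi s x * chi s y) := by
        exact Finset.sum_congr rfl fun x _ => Finset.sum_comm
    _ = ∑ x, ∑ y, ((1/2:ℝ)^n * (1/2:ℝ)^n) * (F x * F y) *
          (if x = y then (2:ℝ)^n else 0) := by
        refine Finset.sum_congr rfl fun x _ => Finset.sum_congr rfl fun y _ => ?_
        rw [← Finset.mul_sum, sum_chi_mul]
    _ = ∑ x : Fin n → Bool, ((1/2:ℝ)^n * (1/2:ℝ)^n) * (F x * F x) * (2:ℝ)^n := by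
        refine Finset.sum_congr rfl fun x _ => ?_
        rw [Finset.sum_eq_single x]
        · simp
        · intro y _ hyx
          rw [if_neg (fun h => hyx h.symm), mul_zero]
        · intro h; exact absurd (mem_univ x) h
    _ = 1 := by
        simp only [hF]
        rw [Finset.sum_const, Finset.card_univ]
        simp only [Fintype.card_fun, Fintype.card_bool, Fintype.card_fin, nsmul_eq_mul]
        push_cast
        have h4 : ((1/2:ℝ)^n * (2:ℝ)^n) = 1 := by rw [← mul_pow]; norm_num
        nlinarith [h4]

lemma mu_marg_right (x : Fin n → Bool) : ∑ y, muCorr ε n x y = (1/2:ℝ)^n := by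
  classical
  calc ∑ y, muCorr ε n x y = ∑ y : Fin n → Bool, ∏ i, kk ε (x i) (y i) := by
        exact Finset.sum_congr rfl fun y _ => mu_prod ε x y
    _ = ∏ i, (kk ε (x i) false + kk ε (x i) true) := sum_pi_prod _
    _ = (1/2:ℝ)^n := by
        have hh : ∀ i, kk ε (x i) false + kk ε (x i) true = (1/2:ℝ) := by
          intro i; cases hx : x i <;> simp [kk] <;> ring
        simp only [hh]
        rw [Finset.prod_const, Finset.card_univ, Fintype.card_fin]

lemma mu_marg_left (y : Fin n → Bool) : ∑ x, muCorr ε n x y = (1/2:ℝ)^n := by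
  classical
  calc ∑ x, muCorr ε n x y = ∑ x : Fin n → Bool, ∏ i, kk ε (y i) (x i) := by
        refine Finset.sum_congr rfl fun x _ => ?_
        rw [mu_prod]
        exact Finset.prod_congr rfl fun i _ => by cases hx : x i <;> cases hy : y i <;> simp [kk]
    _ = ∏ i, (kk ε (y i) false + kk ε (y i) true) := sum_pi_prod _
    _ = (1/2:ℝ)^n := by
        have hh : ∀ i, kk ε (y i) false + kk ε (y i) true = (1/2:ℝ) := by
          intro i; cases hy : y i <;> simp [kk] <;> ring
        simp only [hh]
        rw [Finset.prod_const, Finset.card_univ, Fintype.card_fin]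

lemma mu_total : ∑ x : Fin n → Bool, ∑ y, muCorr ε n x y = 1 := by
  classical
  simp only [mu_marg_right]
  rw [Finset.sum_const, Finset.card_univ]
  simp only [Fintype.card_fun, Fintype.card_bool, Fintype.card_fin, nsmul_eq_mul]
  push_cast
  rw [← mul_pow]
  norm_num

lemma hat_zero (f : (Fin n → Bool) → Bool) :
    hat (fun x => if f x then (-1:ℝ) else 1) (fun _ => false)
      = 2 * ((1/2:ℝ)^n * (univ.filter (fun x => f x = false)).card) - 1 := by
  classical
  have hchi : ∀ x : Fin n → Bool, chi (fun _ => false) x = 1 := by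
    intro x; simp [chi, sgn]
  have hsum : ∑ x : Fin n → Bool, ((if f x then (-1:ℝ) else 1) * chi (fun _ => false) x)
      = 2 * ((univ.filter (fun x => f x = false)).card : ℝ) - (2:ℝ)^n := by
    simp only [hchi, mul_one]
    have : ∀ x : Fin n → Bool, (if f x then (-1:ℝ) else 1)
        = 2 * (if f x = false then (1:ℝ) else 0) - 1 := by
      intro x; cases hx : f x <;> simp [hx] <;> norm_num
    simp only [this]
    rw [Finset.sum_sub_distrib, ← Finset.mul_sum, Finset.sum_boole, Finset.sum_const,
      Finset.card_univ]
    simp [Fintype.card_fun]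
  rw [hat, hsum]
  have h2 : (1/2:ℝ)^n * (2:ℝ)^n = 1 := by rw [← mul_pow]; norm_num
  ring_nf
  ring_nf at h2
  nlinarith [h2]
end

end Yang

open Yang

set_option maxHeartbeats 1600000

/-- Yang's theorem: if `(X, Y)` are `n` i.i.d. uniform bit pairs with correlation
`1 - 2ε` per bit, then for all functions `f, g : {0,1}ⁿ → {0,1}` the correlation
`c_{f(X)g(Y)} = 2 P[f(X) = g(Y)] - 1` is at most `1 - 2ε(1 - 4δ²)`, where `δ` is the
larger of the distances from uniform of `f(X)` and of `g(Y)`. -/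
theorem yang_correlation_bound (ε : ℝ) (hε0 : 0 ≤ ε) (hε1 : ε ≤ 1/2) (n : ℕ)
    (f g : (Fin n → Bool) → Bool) :
    2 * (∑ x, ∑ y, if f x = g y then muCorr ε n x y else 0) - 1
      ≤ 1 - 2 * ε * (1 - 4 *
          (max |(∑ x ∈ univ.filter (fun x => f x = false), ∑ y, muCorr ε n x y) - 1/2|
               |(∑ y ∈ univ.filter (fun y => g y = false), ∑ x, muCorr ε n x y) - 1/2|)^2) := by
  classical
  set pf : ℝ := ∑ x ∈ univ.filter (fun x => f x = false), ∑ y, muCorr ε n x y with hpf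
  set pg : ℝ := ∑ y ∈ univ.filter (fun y => g y = false), ∑ x, muCorr ε n x y with hpg
  set δ : ℝ := max |pf - 1/2| |pg - 1/2| with hδ
  set F : (Fin n → Bool) → ℝ := fun x => if f x then -1 else 1 with hF
  set G : (Fin n → Bool) → ℝ := fun y => if g y then -1 else 1 with hG
  set s₀ : Fin n → Bool := fun _ => false with hs0
  have hFsq : ∀ x, F x * F x = 1 := by intro x; cases hf : f x <;> simp [hF, hf]
  have hGsq : ∀ y, G y * G y = 1 := by intro y; cases hg : g y <;> simp [hG, hg]
  -- bridge between probability form and correlation form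
  have hbridge : ∑ x, ∑ y, F x * G y * muCorr ε n x y
      = 2 * (∑ x, ∑ y, if f x = g y then muCorr ε n x y else 0) - 1 := by
    have hterm : ∀ x y : Fin n → Bool, F x * G y * muCorr ε n x y
        = 2 * (if f x = g y then muCorr ε n x y else 0) - muCorr ε n x y := by
      intro x y
      cases hf : f x <;> cases hg : g y <;> simp [hF, hG, hf, hg] <;> ring
    simp only [hterm]
    simp only [Finset.sum_sub_distrib, ← Finset.mul_sum]
    rw [mu_total ε]
  have hcorr := corr_eq ε F G
  -- value of the empty-set Fourier coefficients
  have hamarg : pf = (1/2:ℝ)^n * ((univ.filter (fun x => f x = false)).card : ℝ) := by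
    rw [hpf, Finset.sum_congr rfl (fun x _ => mu_marg_right ε x), Finset.sum_const,
      nsmul_eq_mul]
    ring
  have hbmarg : pg = (1/2:ℝ)^n * ((univ.filter (fun y => g y = false)).card : ℝ) := by
    rw [hpg, Finset.sum_congr rfl (fun y _ => mu_marg_left ε y), Finset.sum_const,
      nsmul_eq_mul]
    ring
  have ha : hat F s₀ = 2 * pf - 1 := by
    rw [hF, hs0, hat_zero f, hamarg]
  have hb : hat G s₀ = 2 * pg - 1 := by
    rw [hG, hs0, hat_zero g, hbmarg]
  -- split the spectral sum at s₀
  have hsplit : ∑ s, rpow ε s * (hat F s * hat G s)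
      = rpow ε s₀ * (hat F s₀ * hat G s₀)
        + ∑ s ∈ univ.erase s₀, rpow ε s * (hat F s * hat G s) :=
    (Finset.add_sum_erase univ _ (mem_univ s₀)).symm
  have hr0 : rpow ε s₀ = 1 := by simp [rpow, hs0]
  have hsplitF : ∑ s ∈ univ.erase s₀, hat F s * hat F s = 1 - hat F s₀ * hat F s₀ := by
    have h1 := (Finset.add_sum_erase univ (fun s => hat F s * hat F s) (mem_univ s₀)).symm
    rw [parseval F hFsq] at h1
    linarith
  have hsplitG : ∑ s ∈ univ.erase s₀, hat G s * hat G s = 1 - hat G s₀ * hat G s₀ := by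
    have h1 := (Finset.add_sum_erase univ (fun s => hat G s * hat G s) (mem_univ s₀)).symm
    rw [parseval G hGsq] at h1
    linarith
  -- bound the noise factor
  have hrn : ∀ s : Fin n → Bool, 0 ≤ rpow ε s := by
    intro s
    refine Finset.prod_nonneg fun i _ => ?_
    split <;> linarith
  have hrle : ∀ s ∈ univ.erase s₀, rpow ε s ≤ 1 - 2*ε := by
    intro s hs
    obtain ⟨i, hi⟩ : ∃ i, s i = true := by
      by_contra hcon
      push_neg at hcon
      exact (Finset.mem_erase.1 hs).1 (funext fun i => by
        rw [hs0]; exact Bool.eq_false_iff.2 (hcon i))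
    have hpow : rpow ε s = (1-2*ε) ^ (univ.filter (fun i => s i = true)).card := by
      rw [rpow, ← Finset.prod_filter_mul_prod_filter_not univ (fun i => s i = true)]
      rw [Finset.prod_congr rfl (fun j hj => if_pos (Finset.mem_filter.1 hj).2),
        Finset.prod_congr rfl (fun j hj => if_neg (Finset.mem_filter.1 hj).2),
        Finset.prod_const, Finset.prod_const, one_pow, mul_one]
    rw [hpow]
    have hcard : 1 ≤ (univ.filter (fun i => s i = true)).card :=
      Finset.card_pos.2 ⟨i, Finset.mem_filter.2 ⟨mem_univ i, hi⟩⟩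
    calc (1-2*ε) ^ (univ.filter (fun i => s i = true)).card
        ≤ (1-2*ε) ^ 1 := pow_le_pow_of_le_one (by linarith) (by linarith) hcard
      _ = 1-2*ε := pow_one _
  -- bound the tail
  have htail : ∑ s ∈ univ.erase s₀, rpow ε s * (hat F s * hat G s)
      ≤ (1-2*ε) * (((1 - hat F s₀ * hat F s₀) + (1 - hat G s₀ * hat G s₀))/2) := by
    calc ∑ s ∈ univ.erase s₀, rpow ε s * (hat F s * hat G s)
        ≤ ∑ s ∈ univ.erase s₀,
            (1-2*ε) * ((hat F s * hat F s + hat G s * hat G s)/2) := by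
          refine Finset.sum_le_sum fun s hs => ?_
          have hM : hat F s * hat G s ≤ (hat F s * hat F s + hat G s * hat G s)/2 := by
            nlinarith [sq_nonneg (hat F s - hat G s)]
          have hM0 : 0 ≤ (hat F s * hat F s + hat G s * hat G s)/2 := by
            nlinarith [mul_self_nonneg (hat F s), mul_self_nonneg (hat G s)]
          calc rpow ε s * (hat F s * hat G s)
              ≤ rpow ε s * ((hat F s * hat F s + hat G s * hat G s)/2) :=
                mul_le_mul_of_nonneg_left hM (hrn s)
            _ ≤ (1-2*ε) * ((hat F s * hat F s + hat G s * hat G s)/2) :=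
                mul_le_mul_of_nonneg_right (hrle s hs) hM0
      _ = (1-2*ε) * ((∑ s ∈ univ.erase s₀, hat F s * hat F s
            + ∑ s ∈ univ.erase s₀, hat G s * hat G s)/2) := by
          rw [← Finset.sum_add_distrib, ← Finset.mul_sum, ← Finset.sum_div]
      _ = _ := by rw [hsplitF, hsplitG]
  -- distance-from-uniform bounds
  have hA : (2*pf-1)^2 ≤ 4*δ^2 := by
    have h1 : |pf - 1/2| ≤ δ := le_max_left _ _
    obtain ⟨l, r⟩ := abs_le.1 h1
    nlinarith [mul_nonneg (by linarith : (0:ℝ) ≤ δ - (pf - 1/2))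
      (by linarith : (0:ℝ) ≤ δ + (pf - 1/2))]
  have hB : (2*pg-1)^2 ≤ 4*δ^2 := by
    have h1 : |pg - 1/2| ≤ δ := le_max_right _ _
    obtain ⟨l, r⟩ := abs_le.1 h1
    nlinarith [mul_nonneg (by linarith : (0:ℝ) ≤ δ - (pg - 1/2))
      (by linarith : (0:ℝ) ≤ δ + (pg - 1/2))]
  -- assemble
  rw [← hbridge, hcorr, hsplit, hr0, one_mul, ha, hb]
  rw [ha, hb] at htail
  nlinarith [htail, sq_nonneg (2*pf - 2*pg),
    mul_le_mul_of_nonneg_left hA hε0, mul_le_mul_of_nonneg_left hB hε0]
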